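/- Suppose that in Algorithm niAPG every proximal step is exact, F is bounded below, and F is coercive (F(x) → +∞ as ‖x‖ → +∞). Then the sequences (x_k)_{k≥1} and (v_k)_{k≥1} are bounded, and hence each has at least one limit point (a convergent subsequence). -/

import Mathlib

/-!
Along the niAPG iterates the objective never rises above `F (x 1)`: an exact proximal gradient
step with `η L ≤ 1` does not increase `F` (descent lemma plus comparing the proximal objective
with the point `v_k` itself), and the extrapolated point `v_k` is only accepted when
`F (v_k)` does not exceed the maximum of `F` over the last `q + 1` iterates. So all `x_k` and
`v_k` lie in the sublevel set `{F ≤ F (x 1)}`, which is bounded by coercivity, and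
Bolzano–Weierstrass in finite dimension gives the convergent subsequences.
-/

open Filter Bornology

open scoped RealInnerProductSpace Topology

theorem quadratic_upper_bound_of_lipschitz_gradient {E : Type*} [NormedAddCommGroup E]
    [InnerProductSpace ℝ E] [CompleteSpace E] {f : E → ℝ} {f' : E → E} {L : ℝ}
    (hf : ∀ x, HasGradientAt f (f' x) x) (hlip : ∀ x y, ‖f' x - f' y‖ ≤ L * ‖x - y‖)
    (x y : E) : f y ≤ f x + ⟪f' x, y - x⟫ + L / 2 * ‖y - x‖ ^ 2 := by
  set d := y - x
  -- The claim is `φ 1 ≤ φ 0`.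
  let φ : ℝ → ℝ := fun t => f (x + t • d) - t * ⟪f' x, d⟫ - L / 2 * t ^ 2 * ‖d‖ ^ 2
  have hφ' : ∀ t, HasDerivAt φ (⟪f' (x + t • d), d⟫ - ⟪f' x, d⟫ - L * t * ‖d‖ ^ 2) t := by
    intro t
    have hline : HasDerivAt (fun s : ℝ => x + s • d) d t := by
      simpa using ((hasDerivAt_id t).smul_const d).const_add x
    have hcomp := (hf (x + t • d)).hasFDerivAt.comp_hasDerivAt t hline
    refine ((hcomp.sub ((hasDerivAt_id t).mul_const ⟪f' x, d⟫)).sub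
      ((((hasDerivAt_id t).pow 2).const_mul (L / 2)).mul_const (‖d‖ ^ 2))).congr_deriv ?_
    simp only [InnerProductSpace.toDual_apply_apply, id]
    ring
  have hφ'_nonpos : ∀ t ∈ interior (Set.Icc (0 : ℝ) 1),
      ⟪f' (x + t • d), d⟫ - ⟪f' x, d⟫ - L * t * ‖d‖ ^ 2 ≤ 0 := by
    intro t ht
    rw [interior_Icc] at ht
    have hgrad : ‖f' (x + t • d) - f' x‖ ≤ L * (t * ‖d‖) := by
      simpa [norm_smul, abs_of_pos ht.1] using hlip (x + t • d) x
    calc ⟪f' (x + t • d), d⟫ - ⟪f' x, d⟫ - L * t * ‖d‖ ^ 2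
        = ⟪f' (x + t • d) - f' x, d⟫ - L * t * ‖d‖ ^ 2 := by rw [inner_sub_left]
      _ ≤ ‖f' (x + t • d) - f' x‖ * ‖d‖ - L * t * ‖d‖ ^ 2 := by
          gcongr; exact real_inner_le_norm _ _
      _ ≤ L * (t * ‖d‖) * ‖d‖ - L * t * ‖d‖ ^ 2 := by gcongr
      _ = 0 := by ring
  have hanti : AntitoneOn φ (Set.Icc 0 1) :=
    antitoneOn_of_hasDerivWithinAt_nonpos (convex_Icc 0 1)
      (HasDerivAt.continuousOn fun t _ => hφ' t) (fun t _ => (hφ' t).hasDerivWithinAt)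
      hφ'_nonpos
  have h10 : φ 1 ≤ φ 0 := hanti (by simp) (by simp) zero_le_one
  simp only [φ, one_smul, zero_smul, add_zero, d, add_sub_cancel] at h10
  linarith

theorem prox_grad_step_objective_le {E : Type*} [NormedAddCommGroup E]
    [InnerProductSpace ℝ E] [CompleteSpace E] {f g : E → ℝ} {f' : E → E} {L η : ℝ}
    (hf : ∀ x, HasGradientAt f (f' x) x) (hlip : ∀ x y, ‖f' x - f' y‖ ≤ L * ‖x - y‖)
    (hη : 0 < η) (hηL : η * L ≤ 1) {v p : E}
    (hp : ∀ w, 1 / 2 * ‖p - (v - η • f' v)‖ ^ 2 + η * g p ≤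
      1 / 2 * ‖w - (v - η • f' v)‖ ^ 2 + η * g w) :
    f p + g p ≤ f v + g v := by
  have hcompare := hp v
  rw [sub_sub_cancel, show p - (v - η • f' v) = (p - v) + η • f' v by abel, norm_add_sq_real,
    real_inner_smul_right] at hcompare
  have hdescent := quadratic_upper_bound_of_lipschitz_gradient hf hlip v p
  rw [real_inner_comm] at hdescent
  have hslack : 0 ≤ (1 - η * L) * ‖p - v‖ ^ 2 := mul_nonneg (by linarith) (sq_nonneg _)
  have : η * (f p + g p) ≤ η * (f v + g v) := by nlinarith
  exact le_of_mul_le_mul_left this hη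

theorem apply_le_of_forall_succ_le_earlier {α : Type*} [Preorder α] {a : ℕ → α} {m : ℕ}
    (h : ∀ k, m ≤ k → ∃ t, m ≤ t ∧ t ≤ k ∧ a (k + 1) ≤ a t) : ∀ k, m ≤ k → a k ≤ a m := by
  intro k
  induction k using Nat.strong_induction_on with
  | _ k ih =>
    intro hk
    rcases Nat.eq_or_lt_of_le hk with rfl | hlt
    · exact le_rfl
    · obtain ⟨j, rfl⟩ : ∃ j, k = j + 1 := Nat.exists_eq_add_one.mpr (by omega)
      obtain ⟨t, hmt, htj, hle⟩ := h j (by omega)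
      exact hle.trans (ih t (by omega) hmt)

theorem isBounded_sublevel_of_tendsto_cobounded {α β : Type*} [Bornology α] [LinearOrder β]
    [NoMaxOrder β] {F : α → β} (hF : Tendsto F (cobounded α) atTop) (c : β) :
    IsBounded {w | F w ≤ c} := by
  rw [isBounded_def]
  filter_upwards [hF (Ioi_mem_atTop c)] with w hw
  simpa using hw

theorem exists_norm_le_and_tendsto_subseq_of_mem_isBounded {E : Type*} [NormedAddCommGroup E]
    [ProperSpace E] {s : Set E} (hs : IsBounded s) {u : ℕ → E} (hu : ∀ k, 1 ≤ k → u k ∈ s) :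
    (∃ C : ℝ, ∀ k, 1 ≤ k → ‖u k‖ ≤ C) ∧
      ∃ u' : E, ∃ σ : ℕ → ℕ, StrictMono σ ∧ Tendsto (fun j => u (σ j + 1)) atTop (𝓝 u') := by
  obtain ⟨C, hC⟩ := hs.exists_norm_le
  obtain ⟨u', -, σ, hσ, hlim⟩ := tendsto_subseq_of_bounded hs fun j => hu (j + 1) (by omega)
  exact ⟨⟨C, fun k hk => hC _ (hu k hk)⟩, u', σ, hσ, hlim⟩

/-- Theorem 1, first part: boundedness and existence of limit points.
With exact proximal steps, `F` bounded below and coercive, the niAPG sequences `(x_k)_{k≥1}`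
and `(v_k)_{k≥1}` are bounded, and each has a convergent subsequence. -/
theorem niAPG_exact_bounded_limit_points
    {E : Type*} [NormedAddCommGroup E] [InnerProductSpace ℝ E] [FiniteDimensional ℝ E]
    (f g F : E → ℝ) (f' : E → E) (L η : ℝ)
    (hL : 0 < L)
    (hf : ∀ x, HasGradientAt f (f' x) x)
    (hlip : ∀ x y, ‖f' x - f' y‖ ≤ L * ‖x - y‖)
    (hF : ∀ x, F x = f x + g x)
    (hcoer : Tendsto F (Filter.comap (fun w : E => ‖w‖) atTop) atTop)
    (hη : 0 < η) (hηL : η < 1 / L)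
    (q : ℕ) (x y v z : ℕ → E) (Δ : ℕ → ℝ)
    (hΔ : ∀ k, ∀ hk : 1 ≤ k, Δ k =
      (Finset.Icc (max 1 (k - q)) k).sup' (Finset.nonempty_Icc.mpr (by omega))
        (fun t => F (x t)))
    (hv : ∀ k, 1 ≤ k → v k = if F (y k) ≤ Δ k then y k else x k)
    (hz : ∀ k, 1 ≤ k → z k = v k - η • f' (v k))
    (hprox : ∀ k, 1 ≤ k → ∀ w : E,
      (1 / 2) * ‖x (k + 1) - z k‖ ^ 2 + η * g (x (k + 1)) ≤
        (1 / 2) * ‖w - z k‖ ^ 2 + η * g w) :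
    (∃ C : ℝ, ∀ k, 1 ≤ k → ‖x k‖ ≤ C) ∧
    (∃ C : ℝ, ∀ k, 1 ≤ k → ‖v k‖ ≤ C) ∧
    (∃ x' : E, ∃ σ : ℕ → ℕ, StrictMono σ ∧
      Tendsto (fun j => x (σ j + 1)) atTop (nhds x')) ∧
    (∃ v' : E, ∃ σ : ℕ → ℕ, StrictMono σ ∧
      Tendsto (fun j => v (σ j + 1)) atTop (nhds v')) := by
  have hηL' : η * L ≤ 1 := ((lt_div_iff₀ hL).mp (one_div L ▸ hηL)).le
  have hstep : ∀ k, 1 ≤ k → F (x (k + 1)) ≤ F (v k) := fun k hk => by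
    rw [hF, hF]
    exact prox_grad_step_objective_le hf hlip hη hηL' (by simpa only [hz k hk] using hprox k hk)
  have hΔ_attained : ∀ k, 1 ≤ k → ∃ t, 1 ≤ t ∧ t ≤ k ∧ Δ k = F (x t) := fun k hk => by
    obtain ⟨t, ht, hΔt⟩ := Finset.exists_mem_eq_sup'
      (Finset.nonempty_Icc.mpr (by omega) : (Finset.Icc (max 1 (k - q)) k).Nonempty)
      (fun t => F (x t))
    rw [Finset.mem_Icc] at ht
    exact ⟨t, le_of_max_le_left ht.1, ht.2, (hΔ k hk).trans hΔt⟩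
  have hvΔ : ∀ k, 1 ≤ k → F (v k) ≤ Δ k := fun k hk => by
    rw [hv k hk]
    split_ifs with hacc
    · exact hacc
    · rw [hΔ k hk]
      exact Finset.le_sup' (fun t => F (x t)) (Finset.mem_Icc.mpr ⟨by omega, le_rfl⟩)
  have hx_le : ∀ k, 1 ≤ k → F (x k) ≤ F (x 1) :=
    apply_le_of_forall_succ_le_earlier fun k hk => by
      obtain ⟨t, ht1, htk, hΔt⟩ := hΔ_attained k hk
      exact ⟨t, ht1, htk, (hstep k hk).trans (hΔt ▸ hvΔ k hk)⟩
  have hv_le : ∀ k, 1 ≤ k → F (v k) ≤ F (x 1) := fun k hk => by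
    obtain ⟨t, ht1, -, hΔt⟩ := hΔ_attained k hk
    exact (hΔt ▸ hvΔ k hk).trans (hx_le t ht1)
  have hsublevel := isBounded_sublevel_of_tendsto_cobounded (comap_norm_atTop (E := E) ▸ hcoer)
    (F (x 1))
  obtain ⟨hx_bdd, hx_subseq⟩ := exists_norm_le_and_tendsto_subseq_of_mem_isBounded hsublevel hx_le
  obtain ⟨hv_bdd, hv_subseq⟩ := exists_norm_le_and_tendsto_subseq_of_mem_isBounded hsublevel hv_le
  exact ⟨hx_bdd, hv_bdd, hx_subseq, hv_subseq⟩
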